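/- arXiv:1403.0906 — 7 statements merged into one kernel-verified Lean document; each statement's English description precedes it below -/
import Mathlib

section
/- Let n ≥ 3, c > 0, and 0 < ε < ε* := ((n−2)/n)·(2/(nc))^{2/(n−2)}. Then the equation c w^n − |w|² + ε = 0 has exactly 3n complex solutions, namely ρ₁ e^{i(2k+1)π/n}, ρ₂ e^{i2kπ/n}, ρ₃ e^{i2kπ/n} for k = 1, …, n, where 0 < ρ₁ < √ε < ρ₂ < (2/(nc))^{1/(n−2)} < ρ₃. -/
/-!
If `c wⁿ - |w|² + ε = 0` then `c wⁿ = |w|² - ε` is real, so with `ρ = |w|` taking moduli gives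
`c ρⁿ = |ρ² - ε|`: either `wⁿ = ρⁿ` and `c ρⁿ - ρ² + ε = 0`, or `wⁿ = -ρⁿ` and
`c ρⁿ + ρ² - ε = 0`. The second radial equation is increasing in `ρ`, so it has one root, below
`√ε`. The first has derivative `n c ρ (ρⁿ⁻² - Rⁿ⁻²)` with `R = (2/(nc))^(1/(n-2))`, so it
decreases on `[0, R]` and increases afterwards; its value at `R` is `ε - ((n-2)/n) R²`, which is
negative exactly when `ε < ε*`, giving two roots, one on each side of `R`. Finally each of the
three distinct values `-ρ₁ⁿ, ρ₂ⁿ, ρ₃ⁿ` has exactly `n` distinct `n`-th roots.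
-/

open Complex Filter

section RealRoots

variable {n : ℕ} {c ε R : ℝ}

lemma strictMonoOn_mul_pow_add_sq (hc : 0 ≤ c) :
    StrictMonoOn (fun ρ : ℝ => c * ρ ^ n + ρ ^ 2 - ε) (Set.Ici 0) := by
  intro a ha b _ hab
  have hn : a ^ n ≤ b ^ n := pow_le_pow_left₀ ha hab.le n
  have h2 : a ^ 2 < b ^ 2 := pow_lt_pow_left₀ hab ha two_ne_zero
  dsimp only
  nlinarith [mul_le_mul_of_nonneg_left hn hc]

lemma exists_root_mul_pow_add_sq (hn : n ≠ 0) (hc : 0 < c) (hε : 0 < ε) :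
    ∃ ρ₁, 0 < ρ₁ ∧ ρ₁ < √ε ∧ {ρ : ℝ | 0 ≤ ρ ∧ c * ρ ^ n + ρ ^ 2 - ε = 0} = {ρ₁} := by
  have hsqrt : 0 < √ε := Real.sqrt_pos.mpr hε
  have hcont : ContinuousOn (fun ρ : ℝ => c * ρ ^ n + ρ ^ 2 - ε) (Set.Icc 0 √ε) := by fun_prop
  have hsign : c * 0 ^ n + 0 ^ 2 - ε < 0 ∧ 0 < c * √ε ^ n + √ε ^ 2 - ε := by
    simp only [zero_pow hn, Real.sq_sqrt hε.le]
    constructor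
    · linarith
    · simp only [add_sub_cancel_right]; positivity
  obtain ⟨ρ₁, ⟨h₀, hlt⟩, hroot⟩ := intermediate_value_Ioo hsqrt.le hcont hsign
  refine ⟨ρ₁, h₀, hlt, Set.eq_singleton_iff_unique_mem.mpr ⟨⟨h₀.le, hroot⟩, ?_⟩⟩
  rintro ρ ⟨hρ, hρroot⟩
  exact (strictMonoOn_mul_pow_add_sq hc.le).injOn hρ h₀.le (hρroot.trans hroot.symm)

lemma hasDerivAt_mul_pow_sub_sq (hn : 2 ≤ n) (hR : n * c * R ^ (n - 2) = 2) (ρ : ℝ) :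
    HasDerivAt (fun ρ : ℝ => c * ρ ^ n - ρ ^ 2 + ε)
      (n * c * ρ * (ρ ^ (n - 2) - R ^ (n - 2))) ρ := by
  have h := (((hasDerivAt_pow n ρ).const_mul c).sub (hasDerivAt_pow 2 ρ)).add_const ε
  refine h.congr_deriv ?_
  obtain ⟨m, rfl⟩ := Nat.exists_eq_add_of_le hn
  simp only [Nat.add_sub_cancel_left] at hR ⊢
  rw [show 2 + m - 1 = m + 1 by omega]
  push_cast at hR ⊢
  linear_combination ρ * hR

lemma strictAntiOn_mul_pow_sub_sq (hn : 3 ≤ n) (hc : 0 < c) (hR : n * c * R ^ (n - 2) = 2) :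
    StrictAntiOn (fun ρ : ℝ => c * ρ ^ n - ρ ^ 2 + ε) (Set.Icc 0 R) := by
  refine strictAntiOn_of_hasDerivWithinAt_neg (convex_Icc 0 R) (by fun_prop)
    (fun ρ _ => (hasDerivAt_mul_pow_sub_sq (by omega) hR ρ).hasDerivWithinAt) ?_
  intro ρ hρ
  rw [interior_Icc] at hρ
  obtain ⟨hρ, hρR⟩ := hρ
  have : ρ ^ (n - 2) < R ^ (n - 2) := pow_lt_pow_left₀ hρR hρ.le (by omega)
  have : (0 : ℝ) < n := by positivity
  exact mul_neg_of_pos_of_neg (by positivity) (by linarith)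

lemma strictMonoOn_mul_pow_sub_sq (hn : 3 ≤ n) (hc : 0 < c) (hR0 : 0 ≤ R)
    (hR : n * c * R ^ (n - 2) = 2) :
    StrictMonoOn (fun ρ : ℝ => c * ρ ^ n - ρ ^ 2 + ε) (Set.Ici R) := by
  refine strictMonoOn_of_hasDerivWithinAt_pos (convex_Ici R) (by fun_prop)
    (fun ρ _ => (hasDerivAt_mul_pow_sub_sq (by omega) hR ρ).hasDerivWithinAt) ?_
  intro ρ hρ
  rw [interior_Ici] at hρ
  have : R ^ (n - 2) < ρ ^ (n - 2) := pow_lt_pow_left₀ hρ hR0 (by omega)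
  have : 0 < ρ := hR0.trans_lt hρ
  have : (0 : ℝ) < n := by positivity
  exact mul_pos (by positivity) (by linarith)

lemma tendsto_mul_pow_sub_sq_atTop (hn : 3 ≤ n) (hc : 0 < c) :
    Tendsto (fun ρ : ℝ => c * ρ ^ n - ρ ^ 2 + ε) atTop atTop := by
  have hfactor : (fun ρ : ℝ => c * ρ ^ n - ρ ^ 2 + ε) =
      fun ρ => ρ ^ 2 * (c * ρ ^ (n - 2) - 1) + ε := by
    funext ρ
    rw [← pow_sub_mul_pow ρ (by omega : 2 ≤ n)]
    ring
  rw [hfactor]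
  refine tendsto_atTop_add_const_right _ ε ((tendsto_pow_atTop two_ne_zero).atTop_mul_atTop₀ ?_)
  exact tendsto_atTop_add_const_right _ (-1)
    ((tendsto_pow_atTop (by omega : n - 2 ≠ 0)).const_mul_atTop hc)

lemma exists_roots_mul_pow_sub_sq (hn : 3 ≤ n) (hc : 0 < c) (hε : 0 < ε) (hR0 : 0 < R)
    (hR : n * c * R ^ (n - 2) = 2) (hεR : ε < ((n : ℝ) - 2) / n * R ^ 2) :
    ∃ ρ₂ ρ₃, √ε < ρ₂ ∧ ρ₂ < R ∧ R < ρ₃ ∧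
      {ρ : ℝ | 0 ≤ ρ ∧ c * ρ ^ n - ρ ^ 2 + ε = 0} = {ρ₂, ρ₃} := by
  set f := fun ρ : ℝ => c * ρ ^ n - ρ ^ 2 + ε with hf
  have hcont : Continuous f := by fun_prop
  have hnpos : (0 : ℝ) < n := by positivity
  have hsqrt : 0 < √ε := Real.sqrt_pos.mpr hε
  have hfsqrt : 0 < f √ε := by simp only [hf, Real.sq_sqrt hε.le, sub_add_cancel]; positivity
  have hfR : f R < 0 := by
    have hRn : c * R ^ n = 2 / n * R ^ 2 := by
      rw [← pow_sub_mul_pow R (by omega : 2 ≤ n), ← hR]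
      field_simp
    simp only [hf, hRn]
    field_simp at hεR ⊢
    linarith
  have hsqrtR : √ε < R := by
    rw [Real.sqrt_lt' hR0]
    have : ((n : ℝ) - 2) / n < 1 := by rw [div_lt_one hnpos]; linarith
    nlinarith
  obtain ⟨M, hRM, hfM⟩ := ((Filter.eventually_gt_atTop R).and
    ((tendsto_mul_pow_sub_sq_atTop hn hc).eventually_gt_atTop 0)).exists
  obtain ⟨ρ₂, ⟨h₂, h₂R⟩, hroot₂⟩ :=
    intermediate_value_Ioo' hsqrtR.le hcont.continuousOn ⟨hfR, hfsqrt⟩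
  obtain ⟨ρ₃, ⟨h₃, -⟩, hroot₃⟩ := intermediate_value_Ioo hRM.le hcont.continuousOn ⟨hfR, hfM⟩
  refine ⟨ρ₂, ρ₃, h₂, h₂R, h₃, Set.Subset.antisymm ?_ ?_⟩
  · rintro ρ ⟨hρ, hroot⟩
    rcases le_or_gt ρ R with hρR | hρR
    · exact .inl <| (strictAntiOn_mul_pow_sub_sq hn hc hR).injOn ⟨hρ, hρR⟩
        ⟨(hsqrt.trans h₂).le, h₂R.le⟩ (hroot.trans hroot₂.symm)
    · exact .inr <| (strictMonoOn_mul_pow_sub_sq hn hc hR0.le hR).injOn hρR.le h₃.le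
        (hroot.trans hroot₃.symm)
  · rintro ρ (rfl | rfl)
    exacts [⟨(hsqrt.trans h₂).le, hroot₂⟩, ⟨(hR0.trans h₃).le, hroot₃⟩]

end RealRoots

section RootsOfUnity

variable {K : Type*} [Field K] {ζ : K} {n : ℕ}

lemma IsPrimitiveRoot.pow_eq_pow_iff_exists_Icc (hζ : IsPrimitiveRoot ζ n) (hn : n ≠ 0)
    {α : K} (hα : α ≠ 0) (w : K) :
    w ^ n = α ^ n ↔ ∃ k : Finset.Icc 1 n, w = α * ζ ^ (k : ℕ) := by
  have : NeZero n := ⟨hn⟩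
  constructor
  · intro hw
    obtain ⟨i, hi, hζi⟩ := hζ.eq_pow_of_pow_eq_one (ξ := w / α)
      (by rw [div_pow, hw, div_self (pow_ne_zero n hα)])
    -- the exponent `0` is represented by `n`, as `ζ ^ n = ζ ^ 0`
    obtain ⟨k, hk, hζk⟩ : ∃ k ∈ Finset.Icc 1 n, ζ ^ k = ζ ^ i := by
      rcases Nat.eq_zero_or_pos i with rfl | hi0
      · exact ⟨n, Finset.mem_Icc.mpr ⟨Nat.one_le_iff_ne_zero.mpr hn, le_rfl⟩,
          by rw [hζ.pow_eq_one, pow_zero]⟩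
      · exact ⟨i, Finset.mem_Icc.mpr ⟨hi0, hi.le⟩, rfl⟩
    exact ⟨⟨k, hk⟩, by rw [hζk, hζi, mul_div_cancel₀ w hα]⟩
  · rintro ⟨k, rfl⟩
    rw [mul_pow, ← pow_mul, mul_comm (k : ℕ) n, pow_mul, hζ.pow_eq_one, one_pow, mul_one]

lemma IsPrimitiveRoot.ncard_setOf_pow_eq_pow (hζ : IsPrimitiveRoot ζ n) (hn : n ≠ 0) {α : K}
    (hα : α ≠ 0) : {w : K | w ^ n = α ^ n}.ncard = n := by
  classical
  have hset : {w : K | w ^ n = α ^ n} = ↑(Polynomial.nthRootsFinset n (α ^ n)) := by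
    ext w; simp [Polynomial.mem_nthRootsFinset (Nat.pos_of_ne_zero hn)]
  rw [hset, Set.ncard_coe_finset, Polynomial.nthRootsFinset_def,
    Multiset.toFinset_card_of_nodup (hζ.nthRoots_nodup (pow_ne_zero n hα)),
    hζ.nthRoots_eq rfl, Multiset.card_map, Multiset.card_range]

lemma IsPrimitiveRoot.ncard_setOf_pow_eq_or (hζ : IsPrimitiveRoot ζ n) (hn : n ≠ 0)
    {α β γ : K} (hα : α ≠ 0) (hβ : β ≠ 0) (hγ : γ ≠ 0) (hαβ : α ^ n ≠ β ^ n)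
    (hαγ : α ^ n ≠ γ ^ n) (hβγ : β ^ n ≠ γ ^ n) :
    {w : K | w ^ n = α ^ n ∨ w ^ n = β ^ n ∨ w ^ n = γ ^ n}.ncard = 3 * n := by
  have hfin : ∀ a : K, {w : K | w ^ n = a}.Finite := fun a => by
    classical
    convert (Polynomial.nthRootsFinset n a).finite_toSet
    ext w; simp [Polynomial.mem_nthRootsFinset (Nat.pos_of_ne_zero hn)]
  have hdisj : ∀ {a b : K}, a ≠ b → Disjoint {w : K | w ^ n = a} {w | w ^ n = b} :=
    fun hab => Set.disjoint_left.mpr fun w ha hb => hab (ha.symm.trans hb)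
  simp only [Set.ofPred_or]
  rw [Set.ncard_union_eq ((hdisj hαβ).union_right (hdisj hαγ)) (hfin _)
      ((hfin _).union (hfin _)), Set.ncard_union_eq (hdisj hβγ) (hfin _) (hfin _),
    hζ.ncard_setOf_pow_eq_pow hn hα, hζ.ncard_setOf_pow_eq_pow hn hβ,
    hζ.ncard_setOf_pow_eq_pow hn hγ]
  ring

end RootsOfUnity

lemma exp_two_mul_pi_div_mul_I (n k : ℕ) :
    exp (((2 * k) * Real.pi / n : ℝ) * I) = exp (2 * Real.pi * I / n) ^ k := by
  rw [← exp_nat_mul]; push_cast; ring_nf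

lemma exp_odd_mul_pi_div_mul_I (n k : ℕ) :
    exp (((2 * k + 1) * Real.pi / n : ℝ) * I) =
      exp ((Real.pi / n : ℝ) * I) * exp (2 * Real.pi * I / n) ^ k := by
  rw [← exp_two_mul_pi_div_mul_I, ← exp_add]; push_cast; ring_nf

lemma exp_pi_div_mul_I_pow {n : ℕ} (hn : n ≠ 0) : exp ((Real.pi / n : ℝ) * I) ^ n = -1 := by
  rw [← exp_nat_mul, ← exp_pi_mul_I]; push_cast; field_simp

lemma truncated_eq_zero_iff {n : ℕ} {c ε : ℝ} (hc : 0 < c) (w : ℂ) :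
    (c : ℂ) * w ^ n - (‖w‖ : ℂ) ^ 2 + ε = 0 ↔
      (w ^ n = (‖w‖ : ℂ) ^ n ∧ c * ‖w‖ ^ n - ‖w‖ ^ 2 + ε = 0) ∨
      (w ^ n = -(‖w‖ : ℂ) ^ n ∧ c * ‖w‖ ^ n + ‖w‖ ^ 2 - ε = 0) := by
  have hc' : (c : ℂ) ≠ 0 := ofReal_ne_zero.mpr hc.ne'
  constructor
  · intro h
    have hwn : (c : ℂ) * w ^ n = ((‖w‖ ^ 2 - ε : ℝ) : ℂ) := by push_cast; linear_combination h
    have hnorm : c * ‖w‖ ^ n = |‖w‖ ^ 2 - ε| := by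
      have := congrArg norm hwn
      rwa [norm_mul, norm_pow, norm_real, norm_real, Real.norm_eq_abs, Real.norm_eq_abs,
        abs_of_pos hc] at this
    rcases le_or_gt ε (‖w‖ ^ 2) with hle | hlt
    · rw [abs_of_nonneg (by linarith)] at hnorm
      refine .inl ⟨mul_left_cancel₀ hc' ?_, by linarith⟩
      rw [hwn, ← hnorm]; push_cast; rfl
    · rw [abs_of_neg (by linarith)] at hnorm
      refine .inr ⟨mul_left_cancel₀ hc' ?_, by linarith⟩
      rw [hwn, show ‖w‖ ^ 2 - ε = -(c * ‖w‖ ^ n) by linarith]; push_cast; ring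
  · rintro (⟨hw, h⟩ | ⟨hw, h⟩) <;> rw [hw]
    · exact_mod_cast h
    · have h' : (c : ℂ) * ‖w‖ ^ n + ‖w‖ ^ 2 - ε = 0 := by exact_mod_cast h
      linear_combination -h'

lemma truncated_eq_zero_iff_pow_eq {n : ℕ} {c ε ρ₁ ρ₂ ρ₃ : ℝ} (hn : n ≠ 0) (hc : 0 < c)
    (h₁ : {ρ : ℝ | 0 ≤ ρ ∧ c * ρ ^ n + ρ ^ 2 - ε = 0} = {ρ₁})
    (h₂₃ : {ρ : ℝ | 0 ≤ ρ ∧ c * ρ ^ n - ρ ^ 2 + ε = 0} = {ρ₂, ρ₃}) (w : ℂ) :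
    (c : ℂ) * w ^ n - (‖w‖ : ℂ) ^ 2 + ε = 0 ↔
      w ^ n = -(ρ₁ : ℂ) ^ n ∨ w ^ n = (ρ₂ : ℂ) ^ n ∨ w ^ n = (ρ₃ : ℂ) ^ n := by
  have mem₁ := fun ρ => (Set.ext_iff.mp h₁ ρ).trans Set.mem_singleton_iff
  have mem₂₃ := fun ρ => (Set.ext_iff.mp h₂₃ ρ).trans
    (by rw [Set.mem_insert_iff, Set.mem_singleton_iff])
  have hnorm : ∀ {ρ : ℝ}, 0 ≤ ρ → (w ^ n = (ρ : ℂ) ^ n ∨ w ^ n = -(ρ : ℂ) ^ n) → ‖w‖ = ρ :=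
    fun hρ hw => (pow_left_inj₀ (norm_nonneg w) hρ hn).mp <| by
      rcases hw with hw | hw <;> simpa [abs_of_nonneg hρ] using congrArg norm hw
  rw [truncated_eq_zero_iff hc]
  constructor
  · rintro (⟨hw, h⟩ | ⟨hw, h⟩)
    · rcases (mem₂₃ ‖w‖).mp ⟨norm_nonneg w, h⟩ with hρ | hρ <;> rw [hρ] at hw <;> simp [hw]
    · rw [(mem₁ ‖w‖).mp ⟨norm_nonneg w, h⟩] at hw
      exact .inl hw
  · rintro (hw | hw | hw)
    · obtain ⟨hρ, h⟩ := (mem₁ ρ₁).mpr rfl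
      rw [hnorm hρ (.inr hw)]
      exact .inr ⟨hw, h⟩
    · obtain ⟨hρ, h⟩ := (mem₂₃ ρ₂).mpr (.inl rfl)
      rw [hnorm hρ (.inl hw)]
      exact .inl ⟨hw, h⟩
    · obtain ⟨hρ, h⟩ := (mem₂₃ ρ₃).mpr (.inr rfl)
      rw [hnorm hρ (.inl hw)]
      exact .inl ⟨hw, h⟩

lemma rpow_one_div_pow {b : ℝ} (hb : 0 ≤ b) (x : ℝ) (k : ℕ) :
    (b ^ (1 / x)) ^ k = b ^ (k / x) := by
  rw [← Real.rpow_natCast, ← Real.rpow_mul hb, one_div_mul_eq_div]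

lemma natCast_mul_mul_rpow_one_div_sub_two_pow {n : ℕ} {c : ℝ} (hn : 3 ≤ n) (hc : 0 < c) :
    n * c * ((2 / (n * c)) ^ (1 / ((n : ℝ) - 2))) ^ (n - 2) = 2 := by
  have hn3 : (3 : ℝ) ≤ n := by exact_mod_cast hn
  rw [rpow_one_div_pow (by positivity), Nat.cast_sub (by omega), Nat.cast_ofNat,
    div_self (by linarith), Real.rpow_one]
  field_simp

/-- For `n ≥ 3`, `c > 0` and `0 < ε < ε* = ((n-2)/n)·(2/(nc))^(2/(n-2))`, the equation
`c wⁿ − |w|² + ε = 0` has exactly `3n` solutions: `ρ₁ e^{i(2k+1)π/n}`, `ρ₂ e^{i2kπ/n}`,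
`ρ₃ e^{i2kπ/n}` for `k = 1, …, n`, where
`0 < ρ₁ < √ε < ρ₂ < (2/(nc))^(1/(n-2)) < ρ₃`. -/
theorem zeros_of_truncated_equation (n : ℕ) (hn : 3 ≤ n) (c ε : ℝ) (hc : 0 < c)
    (hε : 0 < ε)
    (hεs : ε < ((n : ℝ) - 2) / n * (2 / (n * c)) ^ ((2 : ℝ) / ((n : ℝ) - 2))) :
    ∃ ρ₁ ρ₂ ρ₃ : ℝ,
      0 < ρ₁ ∧ ρ₁ < Real.sqrt ε ∧ Real.sqrt ε < ρ₂ ∧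
      ρ₂ < (2 / (n * c)) ^ ((1 : ℝ) / ((n : ℝ) - 2)) ∧
      (2 / (n * c)) ^ ((1 : ℝ) / ((n : ℝ) - 2)) < ρ₃ ∧
      (∀ w : ℂ, ((c : ℂ) * w ^ n - (‖w‖ : ℂ) ^ 2 + (ε : ℂ) = 0) ↔
        ∃ k : Finset.Icc 1 n,
          w = (ρ₁ : ℂ) * Complex.exp (((2 * (k : ℕ) + 1) * Real.pi / n : ℝ) * Complex.I) ∨
          w = (ρ₂ : ℂ) * Complex.exp (((2 * (k : ℕ)) * Real.pi / n : ℝ) * Complex.I) ∨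
          w = (ρ₃ : ℂ) * Complex.exp (((2 * (k : ℕ)) * Real.pi / n : ℝ) * Complex.I)) ∧
      Set.ncard {w : ℂ | (c : ℂ) * w ^ n - (‖w‖ : ℂ) ^ 2 + (ε : ℂ) = 0} = 3 * n := by
  have hn0 : n ≠ 0 := by omega
  have hR2 : ((2 / (n * c)) ^ ((1 : ℝ) / ((n : ℝ) - 2))) ^ 2 =
      (2 / (n * c)) ^ ((2 : ℝ) / ((n : ℝ) - 2)) := by
    rw [rpow_one_div_pow (by positivity), Nat.cast_ofNat]
  obtain ⟨ρ₁, h₁, h₁ε, hS₁⟩ := exists_root_mul_pow_add_sq hn0 hc hε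
  obtain ⟨ρ₂, ρ₃, h₂ε, h₂R, hR₃, hS₂₃⟩ := exists_roots_mul_pow_sub_sq hn hc hε
    (by positivity) (natCast_mul_mul_rpow_one_div_sub_two_pow hn hc) (hR2 ▸ hεs)
  have h₂ : 0 < ρ₂ := (Real.sqrt_nonneg ε).trans_lt h₂ε
  have h₃ : ρ₂ < ρ₃ := h₂R.trans hR₃
  have hζ := isPrimitiveRoot_exp n hn0
  set α : ℂ := ρ₁ * exp ((Real.pi / n : ℝ) * I)
  have hα : α ^ n = -(ρ₁ : ℂ) ^ n := by rw [mul_pow, exp_pi_div_mul_I_pow hn0, mul_neg_one]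
  have hsol : ∀ w : ℂ, (c : ℂ) * w ^ n - (‖w‖ : ℂ) ^ 2 + ε = 0 ↔
      w ^ n = α ^ n ∨ w ^ n = (ρ₂ : ℂ) ^ n ∨ w ^ n = (ρ₃ : ℂ) ^ n := by
    rw [hα]; exact truncated_eq_zero_iff_pow_eq hn0 hc hS₁ hS₂₃
  have hα0 : α ≠ 0 := mul_ne_zero (ofReal_ne_zero.mpr h₁.ne') (exp_ne_zero _)
  have h₂0 : (ρ₂ : ℂ) ≠ 0 := ofReal_ne_zero.mpr h₂.ne'
  have h₃0 : (ρ₃ : ℂ) ≠ 0 := ofReal_ne_zero.mpr (h₂.trans h₃).ne'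
  refine ⟨ρ₁, ρ₂, ρ₃, h₁, h₁ε, h₂ε, h₂R, hR₃, fun w => ?_, ?_⟩
  · simp_rw [hsol, hζ.pow_eq_pow_iff_exists_Icc hn0 hα0, hζ.pow_eq_pow_iff_exists_Icc hn0 h₂0,
      hζ.pow_eq_pow_iff_exists_Icc hn0 h₃0, exp_odd_mul_pi_div_mul_I, exp_two_mul_pi_div_mul_I,
      ← mul_assoc, ← exists_or]
    rfl
  · have hpow₁₂ : -ρ₁ ^ n < ρ₂ ^ n := by have := pow_pos h₁ n; have := pow_pos h₂ n; linarith
    have hpow₁₃ : -ρ₁ ^ n < ρ₃ ^ n := hpow₁₂.trans (pow_lt_pow_left₀ h₃ h₂.le hn0)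
    have hpow₂₃ : ρ₂ ^ n < ρ₃ ^ n := pow_lt_pow_left₀ h₃ h₂.le hn0
    rw [Set.ext hsol]
    exact hζ.ncard_setOf_pow_eq_or hn0 hα0 h₂0 h₃0 (by rw [hα]; exact_mod_cast hpow₁₂.ne)
      (by rw [hα]; exact_mod_cast hpow₁₃.ne) (by exact_mod_cast hpow₂₃.ne)
end

section
/- Let n ≥ 3, c > 0, and suppose 0 < ε < min{((n−2)/n)·(2/(nc))^{2/(n−2)}, (1/(c(n−1)))^{2/(n−2)}·((n−1)/n)^{n/(n−2)}}. Then the smaller positive root ρ₂ of cρⁿ − ρ² + ε = 0 satisfies √ε < ρ₂ < (n/(n−1))^{1/2}·√ε. -/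
/-- For `n ≥ 3`, `c > 0` and
`0 < ε < min{((n-2)/n)(2/(nc))^(2/(n-2)), (1/(c(n-1)))^(2/(n-2))·((n-1)/n)^(n/(n-2))}`,
the smaller positive root `ρ₂` of `cρⁿ − ρ² + ε = 0` satisfies
`√ε < ρ₂ < √(n/(n-1))·√ε`. -/
theorem bounds_rho_two (n : ℕ) (hn : 3 ≤ n) (c ε : ℝ) (hc : 0 < c) (hε : 0 < ε)
    (hεb : ε < min (((n : ℝ) - 2) / n * (2 / (n * c)) ^ ((2 : ℝ) / ((n : ℝ) - 2)))
      ((1 / (c * ((n : ℝ) - 1))) ^ ((2 : ℝ) / ((n : ℝ) - 2)) *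
        (((n : ℝ) - 1) / n) ^ ((n : ℝ) / ((n : ℝ) - 2)))) :
    ∀ ρ₂ : ℝ, 0 < ρ₂ → c * ρ₂ ^ n - ρ₂ ^ 2 + ε = 0 →
      (∀ ρ : ℝ, 0 < ρ → c * ρ ^ n - ρ ^ 2 + ε = 0 → ρ₂ ≤ ρ) →
      Real.sqrt ε < ρ₂ ∧ ρ₂ < Real.sqrt ((n : ℝ) / ((n : ℝ) - 1)) * Real.sqrt ε := by
  intro ρ₂ hρ₂ hroot hmin
  have hεb2 : ε < (1 / (c * ((n : ℝ) - 1))) ^ ((2 : ℝ) / ((n : ℝ) - 2)) *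
      (((n : ℝ) - 1) / n) ^ ((n : ℝ) / ((n : ℝ) - 2)) :=
    lt_of_lt_of_le hεb (min_le_right _ _)
  have hN : (3:ℝ) ≤ (n:ℝ) := by exact_mod_cast hn
  set N : ℝ := (n : ℝ) with hNdef
  have hN0 : (0:ℝ) < N := by linarith
  have hN1 : (0:ℝ) < N - 1 := by linarith
  have hN2 : (0:ℝ) < N - 2 := by linarith
  -- lower bound
  have hlow : Real.sqrt ε < ρ₂ := by
    have h1 : 0 < c * ρ₂ ^ n := by positivity
    have h2 : ε < ρ₂ ^ 2 := by nlinarith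
    have h3 := Real.sqrt_lt_sqrt hε.le h2
    rwa [Real.sqrt_sq hρ₂.le] at h3
  refine ⟨hlow, ?_⟩
  set B : ℝ := Real.sqrt (N / (N - 1)) * Real.sqrt ε with hBdef
  have hB0 : 0 < B := by
    apply mul_pos (Real.sqrt_pos.mpr (by positivity)) (Real.sqrt_pos.mpr hε)
  have hBsq : B ^ 2 = N / (N - 1) * ε := by
    rw [hBdef, mul_pow, Real.sq_sqrt (by positivity), Real.sq_sqrt hε.le]
  have hsεB : Real.sqrt ε < B := by
    have h1 : 1 < Real.sqrt (N / (N - 1)) := by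
      apply (Real.lt_sqrt (by norm_num)).mpr
      rw [one_pow, lt_div_iff₀ hN1]; linarith
    nlinarith [Real.sqrt_pos.mpr hε]
  -- key exponent computations
  have hεpow : ε ^ ((N - 2) / 2) < (1 / (c * (N - 1))) * ((N - 1) / N) ^ ((N:ℝ)/2) := by
    have h := Real.rpow_lt_rpow hε.le hεb2 (by positivity : (0:ℝ) < (N - 2) / 2)
    rw [Real.mul_rpow (by positivity) (by positivity), ← Real.rpow_mul (by positivity),
      ← Real.rpow_mul (by positivity)] at h
    have e1 : (2 : ℝ) / (N - 2) * ((N - 2) / 2) = 1 := by field_simp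
    have e2 : N / (N - 2) * ((N - 2) / 2) = N / 2 := by field_simp
    rwa [e1, e2, Real.rpow_one] at h
  have hBn : B ^ n = (N / (N - 1) * ε) ^ ((N:ℝ)/2) := by
    rw [← hBsq]
    have h1 : ((B ^ 2 : ℝ)) ^ ((N:ℝ)/2) = B ^ (N:ℝ) := by
      rw [← Real.rpow_natCast B 2, ← Real.rpow_mul hB0.le]
      push_cast
      rw [show (2:ℝ) * (N / 2) = N from by ring]
    rw [h1, hNdef, Real.rpow_natCast]
  have hkey : c * B ^ n < ε / (N - 1) := by
    rw [hBn, Real.mul_rpow (by positivity) hε.le]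
    have hsplit : ε ^ ((N:ℝ)/2) = ε ^ ((N - 2)/2) * ε := by
      rw [show (N:ℝ)/2 = (N - 2)/2 + 1 from by ring, Real.rpow_add hε, Real.rpow_one]
    rw [hsplit]
    have hP : (0:ℝ) < (N / (N - 1)) ^ ((N:ℝ)/2) := by positivity
    calc c * ((N / (N - 1)) ^ ((N:ℝ)/2) * (ε ^ ((N - 2)/2) * ε))
        < c * ((N / (N - 1)) ^ ((N:ℝ)/2) *
            ((1 / (c * (N - 1))) * ((N - 1) / N) ^ ((N:ℝ)/2) * ε)) := by
          apply mul_lt_mul_of_pos_left _ hc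
          apply mul_lt_mul_of_pos_left _ hP
          exact mul_lt_mul_of_pos_right hεpow hε
      _ = ε / (N - 1) := by
          have hmm : (N / (N - 1)) ^ ((N:ℝ)/2) * ((N - 1) / N) ^ ((N:ℝ)/2) = 1 := by
            rw [← Real.mul_rpow (by positivity) (by positivity),
              show N / (N - 1) * ((N - 1) / N) = 1 from by field_simp, Real.one_rpow]
          have h2 : c * ((N / (N - 1)) ^ ((N:ℝ)/2) *
              ((1 / (c * (N - 1))) * ((N - 1) / N) ^ ((N:ℝ)/2) * ε)) =
              ((N / (N - 1)) ^ ((N:ℝ)/2) * ((N - 1) / N) ^ ((N:ℝ)/2)) *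
                (c * (1 / (c * (N - 1))) * ε) := by ring
          rw [h2, hmm, one_mul]
          field_simp
  have hfB : c * B ^ n - B ^ 2 + ε < 0 := by
    have h2 : B ^ 2 - ε = ε / (N - 1) := by
      rw [hBsq]; field_simp; ring
    linarith
  have hfs : 0 < c * (Real.sqrt ε) ^ n - (Real.sqrt ε) ^ 2 + ε := by
    rw [Real.sq_sqrt hε.le]
    have : 0 < c * (Real.sqrt ε) ^ n := by positivity
    linarith
  -- intermediate value theorem
  set f : ℝ → ℝ := fun ρ => c * ρ ^ n - ρ ^ 2 + ε with hfdef
  have hcont : ContinuousOn f (Set.Icc (Real.sqrt ε) B) := by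
    apply Continuous.continuousOn; fun_prop
  have hsub := intermediate_value_Icc' hsεB.le hcont
  have hmem : (0:ℝ) ∈ Set.Icc (f B) (f (Real.sqrt ε)) := ⟨hfB.le, hfs.le⟩
  obtain ⟨x, hx, hfx⟩ := hsub hmem
  have hxpos : 0 < x := lt_of_lt_of_le (Real.sqrt_pos.mpr hε) hx.1
  have hρ₂x : ρ₂ ≤ x := hmin x hxpos hfx
  have hxB : x < B := lt_of_le_of_ne hx.2 (by
    intro h; rw [h] at hfx; exact absurd hfx (ne_of_lt hfB))
  exact lt_of_le_of_lt hρ₂x hxB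
end

section
/- Let n ≥ 3, c > 0, and let ε > 0 satisfy ε < min{((n−2)/n)(2/(nc))^{2/(n−2)}, (1/(nc))^{2/(n−2)}(n/(n−1))^{n/(n−2)}, (1/(c(n−1)))^{2/(n−2)}((n−1)/n)^{n/(n−2)}}. Let R_G(w) = c w^{n−1} + ε/w. Then at each solution w' of c wⁿ − |w|² + ε = 0 one has |R_G'(w')| = |(n−1) − nε/|w'|²|. In particular, at the solutions w' = ρ₁ e^{i(2k+1)π/n} one has |R_G'(w')| > 1, and at the solutions w' = ρ₂ e^{i2kπ/n} one has |R_G'(w')| < 1. -/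
/-!
At a zero `w` of `c wⁿ − |w|² + ε` the quantity `c wⁿ = |w|² − ε` is real, so
`w² R_G'(w) = (n − 1) c wⁿ − ε = (n − 1)|w|² − nε` and hence
`|R_G'(w)| = |(n − 1) − nε/|w|²|`. This exceeds `1` as soon as `|w|² < ε`, which holds at
modulus `ρ₁`, and is below `1` when `ε < |w|² < nε/(n − 2)`. For `ρ₂`, `ε < ρ₂²` is
immediate; for the upper bound, the first bound on `ε` makes `cρⁿ − ρ² + ε` negative at
`ρ² = nε/(n − 2)`, so by the intermediate value theorem it has a root below that point,
and `ρ₂` is the smallest positive root.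
-/

open Real

theorem pow_lt_of_sq_lt_rpow {s K : ℝ} {m : ℕ} (hs : 0 ≤ s) (hK : 0 ≤ K) (hm : 0 < m)
    (h : s ^ 2 < K ^ ((2 : ℝ) / m)) : s ^ m < K := by
  have hm' : (0 : ℝ) < m := by exact_mod_cast hm
  calc s ^ m = (s ^ 2) ^ ((m : ℝ) / 2) := by
        rw [← rpow_natCast, ← rpow_natCast, ← rpow_mul hs]; congr 1; ring
    _ < (K ^ ((2 : ℝ) / m)) ^ ((m : ℝ) / 2) := by gcongr
    _ = K := by rw [← rpow_mul hK, div_mul_div_comm, mul_comm, div_self (by positivity), rpow_one]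

theorem exists_pos_root_with_sq_lt {n : ℕ} (hn : 3 ≤ n) {c ε : ℝ} (hc : 0 < c) (hε : 0 < ε)
    (hεb : ε < ((n : ℝ) - 2) / n * (2 / (n * c)) ^ ((2 : ℝ) / ((n : ℝ) - 2))) :
    ∃ ρ : ℝ, 0 < ρ ∧ c * ρ ^ n - ρ ^ 2 + ε = 0 ∧ ((n : ℝ) - 2) * ρ ^ 2 < n * ε := by
  have hn2 : (0 : ℝ) < n - 2 := by
    have : (3 : ℝ) ≤ n := by exact_mod_cast hn
    linarith
  set s := √(n * ε / (n - 2))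
  have hs2 : s ^ 2 = n * ε / (n - 2) := sq_sqrt (by positivity)
  have hs : 0 < s := sqrt_pos.mpr (by positivity)
  have hsn2 : s ^ (n - 2) < 2 / (n * c) := by
    apply pow_lt_of_sq_lt_rpow hs.le (by positivity) (by omega)
    rw [Nat.cast_sub (by omega), hs2, div_lt_iff₀ hn2]
    calc n * ε < n * (((n : ℝ) - 2) / n * (2 / (n * c)) ^ ((2 : ℝ) / ((n : ℝ) - 2))) := by
          gcongr
      _ = _ := by field_simp; push_cast; ring
  have hfs : c * s ^ n - s ^ 2 + ε < 0 := by
    have hcs : n * (c * s ^ n) < 2 * s ^ 2 := by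
      calc n * (c * s ^ n) = s ^ (n - 2) * (n * c) * s ^ 2 := by
            rw [← pow_sub_mul_pow s (show 2 ≤ n by omega)]; ring
        _ < 2 * s ^ 2 := by gcongr; rwa [← lt_div_iff₀ (by positivity)]
    have hgap : n * (s ^ 2 - ε) = 2 * s ^ 2 := by rw [hs2]; field_simp; ring
    nlinarith
  obtain ⟨ρ, ⟨hρ, hρs⟩, hroot⟩ : (0 : ℝ) ∈ (fun ρ ↦ c * ρ ^ n - ρ ^ 2 + ε) '' Set.Ioo 0 s :=
    intermediate_value_Ioo' hs.le (by fun_prop) ⟨hfs, by simp [hε, show n ≠ 0 by omega]⟩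
  refine ⟨ρ, hρ, hroot, ?_⟩
  calc ((n : ℝ) - 2) * ρ ^ 2 < (n - 2) * s ^ 2 := by gcongr
    _ = n * ε := by rw [hs2]; field_simp

theorem mul_sq_eq_of_root {n : ℕ} (hn : 2 ≤ n) {c ε : ℝ} {w : ℂ} (hw : w ≠ 0)
    (hroot : (c : ℂ) * w ^ n - (‖w‖ : ℂ) ^ 2 + ε = 0) :
    (((n : ℂ) - 1) * c * w ^ (n - 2) - ε / w ^ 2) * w ^ 2
      = (((n : ℝ) - 1) * ‖w‖ ^ 2 - n * ε : ℝ) := by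
  push_cast
  field_simp
  linear_combination ((n : ℂ) - 1) * hroot + ((n : ℂ) - 1) * c * pow_sub_mul_pow w hn

theorem norm_eq_abs_of_root {n : ℕ} (hn : 2 ≤ n) {c ε : ℝ} {w : ℂ} (hw : w ≠ 0)
    (hroot : (c : ℂ) * w ^ n - (‖w‖ : ℂ) ^ 2 + ε = 0) :
    ‖((n : ℂ) - 1) * c * w ^ (n - 2) - ε / w ^ 2‖ = |(n : ℝ) - 1 - n * ε / ‖w‖ ^ 2| := by
  have hr : 0 < ‖w‖ ^ 2 := by positivity
  have hmul := congrArg norm (mul_sq_eq_of_root hn hw hroot)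
  rw [norm_mul, norm_pow, Complex.norm_real, Real.norm_eq_abs] at hmul
  rw [show (n : ℝ) - 1 - n * ε / ‖w‖ ^ 2 = ((n - 1) * ‖w‖ ^ 2 - n * ε) / ‖w‖ ^ 2 by field_simp,
    abs_div, abs_of_pos hr, ← hmul, mul_div_cancel_right₀ _ hr.ne']

theorem one_lt_abs_sub_div_of_sq_lt {n ε r : ℝ} (hn : 0 < n) (hr : 0 < r) (h : r ^ 2 < ε) :
    1 < |n - 1 - n * ε / r ^ 2| := by
  have : n < n * ε / r ^ 2 := by rw [lt_div_iff₀ (by positivity)]; nlinarith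
  rw [lt_abs]
  right
  linarith

theorem abs_sub_div_lt_one {n ε r : ℝ} (hn : 0 < n) (hr : 0 < r) (h₁ : ε < r ^ 2)
    (h₂ : (n - 2) * r ^ 2 < n * ε) : |n - 1 - n * ε / r ^ 2| < 1 := by
  have hlt : n * ε / r ^ 2 < n := by rw [div_lt_iff₀ (by positivity)]; nlinarith
  have hgt : n - 2 < n * ε / r ^ 2 := by rw [lt_div_iff₀ (by positivity)]; linarith
  rw [abs_lt]
  constructor <;> linarith

theorem sense_of_zeros_G_general (n : ℕ) (hn : 3 ≤ n) (c ε : ℝ) (hc : 0 < c) (hε : 0 < ε)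
    (hεb : ε < min (((n : ℝ) - 2) / n * (2 / (n * c)) ^ ((2 : ℝ) / ((n : ℝ) - 2)))
      (min ((1 / (n * c)) ^ ((2 : ℝ) / ((n : ℝ) - 2)) *
          ((n : ℝ) / ((n : ℝ) - 1)) ^ ((n : ℝ) / ((n : ℝ) - 2)))
        ((1 / (c * ((n : ℝ) - 1))) ^ ((2 : ℝ) / ((n : ℝ) - 2)) *
          (((n : ℝ) - 1) / n) ^ ((n : ℝ) / ((n : ℝ) - 2)))))
    (ρ₁ ρ₂ : ℝ) (hρ₁ : c * ρ₁ ^ n + ρ₁ ^ 2 - ε = 0)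
    (hρ₂ : c * ρ₂ ^ n - ρ₂ ^ 2 + ε = 0)
    (hρ₂min : ∀ ρ : ℝ, 0 < ρ → c * ρ ^ n - ρ ^ 2 + ε = 0 → ρ₂ ≤ ρ) :
    ∀ w : ℂ, w ≠ 0 → (c : ℂ) * w ^ n - (‖w‖ : ℂ) ^ 2 + (ε : ℂ) = 0 →
      ‖((n : ℂ) - 1) * c * w ^ (n - 2) - (ε : ℂ) / w ^ 2‖ =
        |((n : ℝ) - 1) - n * ε / (‖w‖) ^ 2| ∧
      (‖w‖ = ρ₁ →
        1 < ‖((n : ℂ) - 1) * c * w ^ (n - 2) - (ε : ℂ) / w ^ 2‖) ∧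
      (‖w‖ = ρ₂ →
        ‖((n : ℂ) - 1) * c * w ^ (n - 2) - (ε : ℂ) / w ^ 2‖ < 1) := by
  intro w hw hroot
  have hr : 0 < ‖w‖ := norm_pos_iff.mpr hw
  have hcr : 0 < c * ‖w‖ ^ n := by positivity
  have hnorm := norm_eq_abs_of_root (by omega) hw hroot
  refine ⟨hnorm, fun h₁ ↦ ?_, fun h₂ ↦ ?_⟩
  · subst h₁
    rw [hnorm]
    exact one_lt_abs_sub_div_of_sq_lt (by positivity) hr (by linarith)
  · subst h₂
    obtain ⟨ρ, hρ, hρroot, hρlt⟩ :=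
      exists_pos_root_with_sq_lt hn hc hε (hεb.trans_le (min_le_left _ _))
    have hle : ‖w‖ ^ 2 ≤ ρ ^ 2 := by gcongr; exact hρ₂min ρ hρ hρroot
    have hn2 : (0 : ℝ) ≤ n - 2 := by
      have : (3 : ℝ) ≤ n := by exact_mod_cast hn
      linarith
    rw [hnorm]
    exact abs_sub_div_lt_one (by positivity) hr (by linarith) (by nlinarith)

/-- Sense of the zeros of `G(w) = c w^{n-1} + ε/w − conj w`: at every solution `w'` of
`c wⁿ − |w|² + ε = 0` the derivative of the analytic part `R_G(w) = c w^{n-1} + ε/w`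
satisfies `|R_G'(w')| = |(n−1) − nε/|w'|²|`; at the solutions of modulus `ρ₁`
(the positive root of `cρⁿ + ρ² − ε`) it is `> 1` (sense-preserving), and at the solutions
of modulus `ρ₂` (the smaller positive root of `cρⁿ − ρ² + ε`) it is `< 1`
(sense-reversing). -/
theorem sense_of_zeros_G (n : ℕ) (hn : 3 ≤ n) (c ε : ℝ) (hc : 0 < c) (hε : 0 < ε)
    (hεb : ε < min (((n : ℝ) - 2) / n * (2 / (n * c)) ^ ((2 : ℝ) / ((n : ℝ) - 2)))
      (min ((1 / (n * c)) ^ ((2 : ℝ) / ((n : ℝ) - 2)) *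
          ((n : ℝ) / ((n : ℝ) - 1)) ^ ((n : ℝ) / ((n : ℝ) - 2)))
        ((1 / (c * ((n : ℝ) - 1))) ^ ((2 : ℝ) / ((n : ℝ) - 2)) *
          (((n : ℝ) - 1) / n) ^ ((n : ℝ) / ((n : ℝ) - 2)))))
    (ρ₁ ρ₂ : ℝ) (hρ₁pos : 0 < ρ₁) (hρ₁ : c * ρ₁ ^ n + ρ₁ ^ 2 - ε = 0)
    (hρ₂pos : 0 < ρ₂) (hρ₂ : c * ρ₂ ^ n - ρ₂ ^ 2 + ε = 0)
    (hρ₂min : ∀ ρ : ℝ, 0 < ρ → c * ρ ^ n - ρ ^ 2 + ε = 0 → ρ₂ ≤ ρ) :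
    ∀ w : ℂ, w ≠ 0 → (c : ℂ) * w ^ n - (‖w‖ : ℂ) ^ 2 + (ε : ℂ) = 0 →
      ‖((n : ℂ) - 1) * c * w ^ (n - 2) - (ε : ℂ) / w ^ 2‖ =
        |((n : ℝ) - 1) - n * ε / (‖w‖) ^ 2| ∧
      (‖w‖ = ρ₁ →
        1 < ‖((n : ℂ) - 1) * c * w ^ (n - 2) - (ε : ℂ) / w ^ 2‖) ∧
      (‖w‖ = ρ₂ →
        ‖((n : ℂ) - 1) * c * w ^ (n - 2) - (ε : ℂ) / w ^ 2‖ < 1) :=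
  sense_of_zeros_G_general n hn c ε hc hε hεb ρ₁ ρ₂ hρ₁ hρ₂ hρ₂min
end

section
/- Let f(z) = R(z) − conj(z) with R rational of degree ≥ 2, let z₀ ∈ ℂ, and let z_k be a regular (non-singular) zero of f with z_k ≠ z₀. Then there exists r > 0 and ε₀ > 0 such that for all 0 < ε < ε₀, the perturbed function F(z) = f(z) + ε/(z − z₀) has exactly one zero in the open disk D(z_k, r), and this zero has the same Poincaré index as z_k has for f. -/
/-!
The map `Φ(ε, z) = R z + ε g z - conj z` (here `g z = 1/(z - z₀)`, holomorphic near `z_k`) is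
strictly differentiable at `(0, z_k)`, and its partial derivative in `z` is the `ℝ`-linear map
`w ↦ R'(z_k) w - conj w`, which is injective, hence invertible, since `|R'(z_k)| ≠ 1`.
The implicit function theorem therefore gives, for small `ε`, a unique zero of `Φ(ε, ·)` near
`z_k`. Since `∂_z Φ(ε, z) = R'(z) + ε g'(z)` tends to `R'(z_k)` as `(ε, z) → (0, z_k)`, its modulus
stays on the same side of `1` as `|R'(z_k)|`, so the Poincaré index is preserved.
-/

open Filter Topology Metric Complex ComplexConjugate

section ImplicitFunction

variable {𝕜 : Type*} [NontriviallyNormedField 𝕜]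
  {E₁ : Type*} [NormedAddCommGroup E₁] [NormedSpace 𝕜 E₁] [CompleteSpace E₁]
  {E₂ : Type*} [NormedAddCommGroup E₂] [NormedSpace 𝕜 E₂] [CompleteSpace E₂]
  {F : Type*} [NormedAddCommGroup F] [NormedSpace 𝕜 F] [CompleteSpace F]

theorem HasStrictFDerivAt.eventually_existsUnique_mem_ball {u : E₁ × E₂} {f : E₁ × E₂ → F}
    {f' : E₁ × E₂ →L[𝕜] F} (hf : HasStrictFDerivAt f f' u)
    (hf₂ : (f' ∘L .inr 𝕜 E₁ E₂).IsInvertible) :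
    ∀ᶠ r in 𝓝[>] 0, ∀ᶠ x in 𝓝 u.1, ∃! y, y ∈ ball u.2 r ∧ f (x, y) = f u := by
  obtain ⟨ρ, hρ, hψ⟩ := Metric.eventually_nhds_iff_ball.1
    (hf.eventually_apply_eq_iff_implicitFunctionOfProdDomain hf₂)
  set ψ := hf.implicitFunctionOfProdDomain hf₂
  filter_upwards [Ioc_mem_nhdsGT hρ] with r hr
  filter_upwards [ball_mem_nhds u.1 hρ,
    hf.tendsto_implicitFunctionOfProdDomain hf₂ (ball_mem_nhds u.2 hr.1)] with x hx hψx
  have hmem : ∀ y ∈ ball u.2 r, (x, y) ∈ ball u ρ := fun y hy =>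
    max_lt hx (lt_of_lt_of_le hy hr.2)
  exact ⟨ψ x, ⟨hψx, (hψ _ (hmem _ hψx)).2 rfl⟩,
    fun y ⟨hy, hfy⟩ => ((hψ _ (hmem y hy)).1 hfy).symm⟩

end ImplicitFunction

theorem Filter.Eventually.nhdsGT_eventually_forall_mem_ball {α β : Type*} [TopologicalSpace α]
    [PseudoMetricSpace β] {x : α} {y : β} {P : α × β → Prop} (h : ∀ᶠ v in 𝓝 (x, y), P v) :
    ∀ᶠ r in 𝓝[>] 0, ∀ᶠ x' in 𝓝 x, ∀ y' ∈ ball y r, P (x', y') := by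
  rw [nhds_prod_eq] at h
  obtain ⟨Px, hPx, Py, hPy, hP⟩ := eventually_prod_iff.1 h
  obtain ⟨ρ, hρ, hρPy⟩ := Metric.eventually_nhds_iff_ball.1 hPy
  filter_upwards [Ioc_mem_nhdsGT hρ] with r hr
  filter_upwards [hPx] with x' hx' y' hy' using hP hx' (hρPy y' (ball_subset_ball hr.2 hy'))

theorem Filter.Tendsto.eventually_one_lt_norm_and_norm_lt_one {α E : Type*}
    [SeminormedAddGroup E] {l : Filter α} {D : α → E} {a : E} (hD : Tendsto D l (𝓝 a)) :
    ∀ᶠ x in l, (1 < ‖a‖ → 1 < ‖D x‖) ∧ (‖a‖ < 1 → ‖D x‖ < 1) := by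
  rcases lt_trichotomy ‖a‖ 1 with ha | ha | ha
  · filter_upwards [hD.norm.eventually (gt_mem_nhds ha)] with x hx
    exact ⟨fun h => absurd ha h.not_gt, fun _ => hx⟩
  · exact Eventually.of_forall fun x => ⟨fun h => absurd ha h.ne', fun h => absurd ha h.ne⟩
  · filter_upwards [hD.norm.eventually (lt_mem_nhds ha)] with x hx
    exact ⟨fun _ => hx, fun h => absurd ha h.not_gt⟩

theorem isInvertible_smul_id_sub_conj {a : ℂ} (ha : ‖a‖ ≠ 1) :
    (a • ContinuousLinearMap.id ℝ ℂ - (conjCLE : ℂ →L[ℝ] ℂ)).IsInvertible := by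
  set L := a • ContinuousLinearMap.id ℝ ℂ - (conjCLE : ℂ →L[ℝ] ℂ)
  have hL : Function.Injective L := by
    refine (injective_iff_map_eq_zero L).2 fun w hw => ?_
    have h : a * w = conj w := by simpa [L, sub_eq_zero] using hw
    have hnorm : ‖a‖ * ‖w‖ = 1 * ‖w‖ := by rw [← norm_mul, h, norm_conj, one_mul]
    by_contra hw0
    exact ha (mul_right_cancel₀ (norm_ne_zero_iff.2 hw0) hnorm)
  exact ⟨(LinearEquiv.ofInjectiveEndo (L : ℂ →ₗ[ℝ] ℂ) hL).toContinuousLinearEquiv, rfl⟩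

theorem hasStrictFDerivAt_add_mul_sub_conj {R g : ℂ → ℂ} {a b z : ℂ}
    (hR : HasStrictDerivAt R a z) (hg : HasStrictDerivAt g b z) :
    ∃ Φ' : ℝ × ℂ →L[ℝ] ℂ,
      HasStrictFDerivAt (fun v : ℝ × ℂ => R v.2 + v.1 * g v.2 - conj v.2) Φ' (0, z) ∧
      Φ' ∘L .inr ℝ ℝ ℂ = a • ContinuousLinearMap.id ℝ ℂ - (conjCLE : ℂ →L[ℝ] ℂ) := by
  have hfst := hasStrictFDerivAt_fst (𝕜 := ℝ) (p := ((0 : ℝ), z))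
  have hsnd := hasStrictFDerivAt_snd (𝕜 := ℝ) (p := ((0 : ℝ), z))
  refine ⟨_, (((hR.hasStrictFDerivAt.restrictScalars ℝ).comp _ hsnd).add
    ((ofRealCLM.hasStrictFDerivAt.comp _ hfst).mul
      ((hg.hasStrictFDerivAt.restrictScalars ℝ).comp _ hsnd))).sub
    ((conjCLE : ℂ →L[ℝ] ℂ).hasStrictFDerivAt.comp _ hsnd), ?_⟩
  ext
  simp [mul_comm]

theorem eventually_existsUnique_mem_ball_add_mul_sub_conj_eq_zero {R g : ℂ → ℂ} {a b zk : ℂ}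
    (hR : HasStrictDerivAt R a zk) (hg : HasStrictDerivAt g b zk) (hzero : R zk = conj zk)
    (ha : ‖a‖ ≠ 1) :
    ∀ᶠ r in 𝓝[>] 0, ∀ᶠ ε : ℝ in 𝓝 0, ∃! z, z ∈ ball zk r ∧ R z + ε * g z - conj z = 0 := by
  obtain ⟨Φ', hΦ, hpartial⟩ := hasStrictFDerivAt_add_mul_sub_conj hR hg
  have hinv := isInvertible_smul_id_sub_conj ha
  rw [← hpartial] at hinv
  simpa [hzero] using hΦ.eventually_existsUnique_mem_ball hinv

theorem AnalyticAt.tendsto_deriv_add_mul {R g : ℂ → ℂ} {z : ℂ} (hR : AnalyticAt ℂ R z)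
    (hg : AnalyticAt ℂ g z) :
    Tendsto (fun v : ℝ × ℂ => deriv (fun w => R w + v.1 * g w) v.2) (𝓝 (0, z))
      (𝓝 (deriv R z)) := by
  have hfst : Tendsto Prod.fst (𝓝 ((0 : ℝ), z)) (𝓝 0) := continuousAt_fst
  have hsnd : Tendsto Prod.snd (𝓝 ((0 : ℝ), z)) (𝓝 z) := continuousAt_snd
  have hderiv : ∀ᶠ v in 𝓝 ((0 : ℝ), z),
      deriv (fun w => R w + v.1 * g w) v.2 = deriv R v.2 + v.1 * deriv g v.2 := by
    filter_upwards [hsnd.eventually (hR.eventually_analyticAt.and hg.eventually_analyticAt)]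
      with v ⟨hRv, hgv⟩
    exact (hRv.differentiableAt.hasDerivAt.add
      (hgv.differentiableAt.hasDerivAt.const_mul _)).deriv
  have hlim : Tendsto (fun v : ℝ × ℂ => deriv R v.2 + v.1 * deriv g v.2) (𝓝 (0, z))
      (𝓝 (deriv R z + ((0 : ℝ) : ℂ) * deriv g z)) :=
    (hR.deriv.continuousAt.tendsto.comp hsnd).add
      ((continuous_ofReal.tendsto 0 |>.comp hfst).mul (hg.deriv.continuousAt.tendsto.comp hsnd))
  rw [ofReal_zero, zero_mul, add_zero] at hlim
  exact hlim.congr' (hderiv.mono fun _ h => h.symm)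

theorem perturbed_zero_survives_general (p q : Polynomial ℂ) (z₀ zk : ℂ) (hne : zk ≠ z₀)
    (hqzk : q.eval zk ≠ 0)
    (hzero : p.eval zk / q.eval zk - (starRingEnd ℂ) zk = 0)
    (hreg : ‖deriv (fun z => p.eval z / q.eval z) zk‖ ≠ 1) :
    ∃ r > 0, ∃ ε₀ > 0, ∀ ε : ℝ, 0 < ε → ε < ε₀ →
      (∃! z : ℂ, z ∈ Metric.ball zk r ∧ q.eval z ≠ 0 ∧ z ≠ z₀ ∧
        p.eval z / q.eval z + (ε : ℂ) / (z - z₀) - (starRingEnd ℂ) z = 0) ∧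
      ∀ z ∈ Metric.ball zk r, q.eval z ≠ 0 → z ≠ z₀ →
        p.eval z / q.eval z + (ε : ℂ) / (z - z₀) - (starRingEnd ℂ) z = 0 →
        ((1 < ‖deriv (fun w => p.eval w / q.eval w) zk‖ →
            1 < ‖deriv (fun w => p.eval w / q.eval w + (ε : ℂ) / (w - z₀)) z‖) ∧
         (‖deriv (fun w => p.eval w / q.eval w) zk‖ < 1 →
            ‖deriv (fun w => p.eval w / q.eval w + (ε : ℂ) / (w - z₀)) z‖ < 1)) := by
  have hR : AnalyticAt ℂ (fun z => p.eval z / q.eval z) zk :=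
    (AnalyticOnNhd.eval_polynomial p zk trivial).div
      (AnalyticOnNhd.eval_polynomial q zk trivial) hqzk
  have hg : AnalyticAt ℂ (fun z => 1 / (z - z₀)) zk :=
    analyticAt_const.div (analyticAt_id.sub analyticAt_const) (sub_ne_zero.2 hne)
  obtain ⟨ρ, hρ, hρgood⟩ := Metric.eventually_nhds_iff_ball.1
    ((q.continuous.continuousAt.eventually_ne hqzk).and (eventually_ne_nhds hne))
  have hsmall : ∀ᶠ r in 𝓝[>] 0, r ∈ Set.Ioc 0 ρ := Ioc_mem_nhdsGT hρ
  have hzeros := eventually_existsUnique_mem_ball_add_mul_sub_conj_eq_zero hR.hasStrictDerivAt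
    hg.hasStrictDerivAt (sub_eq_zero.1 hzero) hreg
  have hsense := (hR.tendsto_deriv_add_mul hg).eventually_one_lt_norm_and_norm_lt_one
    |>.nhdsGT_eventually_forall_mem_ball
  obtain ⟨r, ⟨hr, hzeros_r⟩, hsense_r⟩ := ((hsmall.and hzeros).and hsense).exists
  obtain ⟨ε₀, hε₀, hsmallε⟩ := Metric.eventually_nhds_iff.1 (hzeros_r.and hsense_r)
  refine ⟨r, hr.1, ε₀, hε₀, fun ε hε hεε₀ => ?_⟩
  obtain ⟨hex, hside⟩ := hsmallε (by rwa [Real.dist_eq, sub_zero, abs_of_pos hε])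
  simp only [mul_one_div] at hex hside
  obtain ⟨z, ⟨hz, hz0⟩, huniq⟩ := hex
  have hgood := hρgood z (ball_subset_ball hr.2 hz)
  exact ⟨⟨z, ⟨hz, hgood.1, hgood.2, hz0⟩, fun y ⟨hy, _, _, hy0⟩ => huniq y ⟨hy, hy0⟩⟩,
    fun y hy _ _ _ => hside y hy⟩

/-- Perturbation away from the pole: if `z_k ≠ z₀` is a regular zero of
`f(z) = R(z) − conj z` (with `R = p/q` rational of degree ≥ 2), then there is a disk
`D(z_k, r)` in which, for all sufficiently small `ε > 0`, the perturbed function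
`F(z) = f(z) + ε/(z − z₀)` has exactly one zero, and this zero has the same Poincaré
index as `z_k` (i.e. it is sense-preserving iff `z_k` is, sense-reversing iff `z_k` is). -/
theorem perturbed_zero_survives (p q : Polynomial ℂ) (hq : q ≠ 0) (hcop : IsCoprime p q)
    (hdeg : 2 ≤ max p.natDegree q.natDegree) (z₀ zk : ℂ) (hne : zk ≠ z₀)
    (hqzk : q.eval zk ≠ 0)
    (hzero : p.eval zk / q.eval zk - (starRingEnd ℂ) zk = 0)
    (hreg : ‖deriv (fun z => p.eval z / q.eval z) zk‖ ≠ 1) :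
    ∃ r > 0, ∃ ε₀ > 0, ∀ ε : ℝ, 0 < ε → ε < ε₀ →
      (∃! z : ℂ, z ∈ Metric.ball zk r ∧ q.eval z ≠ 0 ∧ z ≠ z₀ ∧
        p.eval z / q.eval z + (ε : ℂ) / (z - z₀) - (starRingEnd ℂ) z = 0) ∧
      ∀ z ∈ Metric.ball zk r, q.eval z ≠ 0 → z ≠ z₀ →
        p.eval z / q.eval z + (ε : ℂ) / (z - z₀) - (starRingEnd ℂ) z = 0 →
        ((1 < ‖deriv (fun w => p.eval w / q.eval w) zk‖ →
            1 < ‖deriv (fun w => p.eval w / q.eval w + (ε : ℂ) / (w - z₀)) z‖) ∧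
         (‖deriv (fun w => p.eval w / q.eval w) zk‖ < 1 →
            ‖deriv (fun w => p.eval w / q.eval w + (ε : ℂ) / (w - z₀)) z‖ < 1)) :=
  perturbed_zero_survives_general p q z₀ zk hne hqzk hzero hreg
end

section
/- Let n ≥ 3, c > 0, η = (n/(n−1))^{1/2}, and let R be analytic near 0 with R'(0) = … = R^{(n−2)}(0) = 0 and R^{(n−1)}(0)/(n−1)! = c, and R(0) = 0. Then for all sufficiently small ε > 0, the winding of F(w) = R(w) + ε/w − conj(w) along the circle |w| = η√ε equals −1. -/
/-!
On the circle `|w| = r`, `w (ε / w - conj w) = ε - r²`, so with `r² = n ε / (n - 1)` we get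
`e^{it} F(r e^{it}) = e^{it} R(r e^{it}) - r / n`. Since `R(0) = R'(0) = 0`, `R(w) = o(w)`, and
for small `ε` this curve stays in the open left half-plane. A continuous argument of a curve in a
half-plane varies by less than `π`, whereas around a closed loop it varies by a multiple of `2π`;
hence the argument of `e^{it} F` returns to its initial value and that of `F` drops by `2π`.
-/

/-- `hasWinding h a b w` : the continuous function `h : [a,b] → ℂ` admits a continuous
argument lift `θ` and `w = (θ b - θ a)/(2π)` is its winding. -/
def hasWinding (h : ℝ → ℂ) (a b : ℝ) (w : ℝ) : Prop :=
  ∃ θ : ℝ → ℝ, ContinuousOn θ (Set.Icc a b) ∧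
    (∀ t ∈ Set.Icc a b, h t = (‖h t‖ : ℂ) * Complex.exp ((θ t : ℂ) * Complex.I)) ∧
    w = (θ b - θ a) / (2 * Real.pi)

open Real Set ComplexConjugate

lemma Real.exists_cos_eq_zero_mem_Icc {a b : ℝ} (hab : a + π ≤ b) :
    ∃ x ∈ Icc a b, cos x = 0 := by
  obtain ⟨x, hx, hx0⟩ : (0 : ℝ) ∈ cos '' uIcc a (a + π) := by
    refine intermediate_value_uIcc continuous_cos.continuousOn ?_
    rw [cos_add_pi]
    rcases le_total 0 (cos a) with h | h <;> simp [h]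
  rw [uIcc_of_le (by linarith [pi_pos])] at hx
  exact ⟨x, ⟨hx.1, hx.2.trans hab⟩, hx0⟩

lemma abs_sub_lt_pi_of_cos_neg {φ : ℝ → ℝ} {a b : ℝ} (hφ : ContinuousOn φ (uIcc a b))
    (hcos : ∀ t ∈ uIcc a b, cos (φ t) < 0) : |φ b - φ a| < π := by
  by_contra! h
  obtain ⟨x, hx, hx0⟩ :=
    exists_cos_eq_zero_mem_Icc (a := min (φ a) (φ b)) (b := max (φ a) (φ b))
      (by linarith [max_sub_min_eq_abs (φ a) (φ b)])
  obtain ⟨t, ht, rfl⟩ := intermediate_value_uIcc hφ hx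
  exact (hcos t ht).ne hx0

lemma exists_int_of_exp_mul_I_eq_exp_mul_I {x y : ℝ}
    (h : Complex.exp (x * Complex.I) = Complex.exp (y * Complex.I)) :
    ∃ k : ℤ, x = y + k * (2 * π) :=
  Circle.exp_eq_exp.1 <| Subtype.ext <| by simpa only [Circle.coe_exp] using h

theorem hasWinding_circle_eq_neg_of_re_zpow_mul_neg {f : ℂ → ℂ} {m : ℤ} {w : ℝ}
    (hf : ∀ z : ℂ, ‖z‖ = 1 → (z ^ m * f z).re < 0)
    (hw : hasWinding (fun t => f (Complex.exp (t * Complex.I))) 0 (2 * π) w) : w = -m := by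
  obtain ⟨θ, hθc, hθ, rfl⟩ := hw
  set e : ℝ → ℂ := fun t => Complex.exp (t * Complex.I) with he
  have hpolar : ∀ t ∈ Icc 0 (2 * π),
      f (e t) = ‖f (e t)‖ * Complex.exp (θ t * Complex.I) := hθ
  have hfe : ∀ t, (e t ^ m * f (e t)).re < 0 := fun t => hf _ (Complex.norm_exp_ofReal_mul_I t)
  have hne : ∀ t, (‖f (e t)‖ : ℂ) ≠ 0 := fun t h0 => by
    simpa [norm_eq_zero.1 (by exact_mod_cast h0)] using hfe t
  have hπ := pi_pos
  have hIcc : uIcc 0 (2 * π) = Icc 0 (2 * π) := uIcc_of_le (by positivity)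
  have hcos : ∀ t ∈ uIcc 0 (2 * π), cos (θ t + m * t) < 0 := by
    intro t ht
    have hrot : e t ^ m * f (e t) =
        ‖f (e t)‖ * Complex.exp ((θ t + m * t : ℝ) * Complex.I) := by
      conv_lhs => rw [hpolar t (hIcc ▸ ht)]
      rw [he, ← Complex.exp_int_mul]
      push_cast
      rw [mul_left_comm, ← Complex.exp_add]
      ring_nf
    have := hfe t
    rw [hrot, Complex.re_ofReal_mul, Complex.exp_ofReal_mul_I_re] at this
    exact neg_of_mul_neg_right this (norm_nonneg _)
  have hbound := abs_sub_lt_pi_of_cos_neg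
    (hIcc ▸ hθc.add (continuousOn_const.mul continuousOn_id)) hcos
  obtain ⟨k, hk⟩ : ∃ k : ℤ, θ (2 * π) = θ 0 + k * (2 * π) := by
    refine exists_int_of_exp_mul_I_eq_exp_mul_I (mul_left_cancel₀ (hne 0) ?_)
    have hper : e (2 * π) = e 0 := by simp [he, Complex.exp_two_pi_mul_I]
    rw [← hper, ← hpolar (2 * π) ⟨by positivity, le_rfl⟩, hper,
      ← hpolar 0 ⟨le_rfl, by positivity⟩]
  have hkm : k + m = 0 := by
    rw [← Int.abs_lt_one_iff]
    have hdiff :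
        θ (2 * π) + m * (2 * π) - (θ 0 + m * 0) = ((k + m : ℤ) : ℝ) * (2 * π) := by
      rw [hk]
      push_cast
      ring
    rw [hdiff, abs_mul, abs_of_pos (by positivity : 0 < 2 * π)] at hbound
    exact_mod_cast (by nlinarith [abs_nonneg ((k + m : ℤ) : ℝ)] : |((k + m : ℤ) : ℝ)| < 1)
  rw [hk, add_sub_cancel_left, mul_div_cancel_right₀ _ (by positivity)]
  exact_mod_cast eq_neg_of_add_eq_zero_left hkm

lemma re_mul_add_div_sub_conj_neg {z a : ℂ} {r ε : ℝ} (hz : ‖z‖ = 1) (hr : 0 < r)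
    (ha : ‖a‖ < r - ε / r) : (z * (a + ε / (r * z) - conj (r * z))).re < 0 := by
  have hzz : z * conj z = 1 := by rw [Complex.mul_conj', hz]; norm_num
  have hz0 : z ≠ 0 := left_ne_zero_of_mul_eq_one hzz
  have hr0 : (r : ℂ) ≠ 0 := Complex.ofReal_ne_zero.2 hr.ne'
  have key : z * (a + ε / (r * z) - conj (r * z)) = z * a + ((ε / r - r : ℝ) : ℂ) := by
    rw [map_mul, Complex.conj_ofReal]
    push_cast
    field_simp
    linear_combination (-(r : ℂ) ^ 2) * hzz
  have hre : (z * a).re ≤ ‖a‖ :=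
    (Complex.re_le_norm _).trans_eq (by rw [norm_mul, hz, one_mul])
  rw [key, Complex.add_re, Complex.ofReal_re]
  linarith

lemma exists_norm_le_mul_norm_of_hasDerivAt_zero {𝕜 F : Type*} [NontriviallyNormedField 𝕜]
    [NormedAddCommGroup F] [NormedSpace 𝕜 F] {f : 𝕜 → F} (hf : HasDerivAt f 0 0)
    (hf0 : f 0 = 0) {C : ℝ} (hC : 0 < C) :
    ∃ δ > 0, ∀ z, ‖z‖ < δ → ‖f z‖ ≤ C * ‖z‖ := by
  have := (hasDerivAt_iff_isLittleO_nhds_zero.1 hf).def hC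
  simp only [zero_add, hf0, sub_zero, smul_zero] at this
  simpa using Metric.eventually_nhds_iff.1 this

theorem winding_of_F_on_outer_circle_general (n : ℕ) (hn : 3 ≤ n)
    (R : ℂ → ℂ) (hR : AnalyticAt ℂ R 0) (hR0 : R 0 = 0)
    (hders : ∀ k : ℕ, 1 ≤ k → k ≤ n - 2 → iteratedDeriv k R 0 = 0) :
    ∃ ε₀ > 0, ∀ ε : ℝ, 0 < ε → ε < ε₀ →
      ∀ w : ℝ, hasWinding
        (fun t => R ((Real.sqrt ((n : ℝ) / ((n : ℝ) - 1)) * Real.sqrt ε : ℝ) *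
            Complex.exp ((t : ℂ) * Complex.I)) +
          (ε : ℂ) / ((Real.sqrt ((n : ℝ) / ((n : ℝ) - 1)) * Real.sqrt ε : ℝ) *
            Complex.exp ((t : ℂ) * Complex.I)) -
          (starRingEnd ℂ) ((Real.sqrt ((n : ℝ) / ((n : ℝ) - 1)) * Real.sqrt ε : ℝ) *
            Complex.exp ((t : ℂ) * Complex.I)))
        0 (2 * Real.pi) w →
      w = -1 := by
  have hn' : (3 : ℝ) ≤ n := by exact_mod_cast hn
  set η := √((n : ℝ) / (n - 1))
  have hη : 0 < η := sqrt_pos.2 (div_pos (by linarith) (by linarith))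
  have hR' : HasDerivAt R 0 0 := by
    simpa [← iteratedDeriv_one, hders 1 le_rfl (by omega)] using hR.differentiableAt.hasDerivAt
  obtain ⟨δ, hδ, hsmall⟩ :=
    exists_norm_le_mul_norm_of_hasDerivAt_zero hR' hR0 (C := 1 / (2 * n)) (by positivity)
  refine ⟨(δ / η) ^ 2, by positivity, fun ε hε hεδ w hw => ?_⟩
  set r := η * √ε
  have hr : 0 < r := by positivity
  have hrδ : r < δ := by
    calc r < η * (δ / η) := mul_lt_mul_of_pos_left ((sqrt_lt' (by positivity)).2 hεδ) hη
      _ = δ := mul_div_cancel₀ δ hη.ne'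
  have hgap : r - ε / r = r / n := by
    have hr2 : r ^ 2 = n / (n - 1) * ε := by
      rw [mul_pow, sq_sqrt (div_nonneg (by linarith) (by linarith)), sq_sqrt hε.le]
    have hr2' : r ^ 2 * (n - 1) = n * ε := by
      rw [hr2]
      field_simp [(by linarith : (n : ℝ) - 1 ≠ 0)]
    field_simp
    linear_combination hr2'
  refine (hasWinding_circle_eq_neg_of_re_zpow_mul_neg (m := 1)
    (f := fun z => R (r * z) + ε / (r * z) - conj (r * z)) (fun z hz => ?_) hw).trans (by simp)
  rw [zpow_one]
  refine re_mul_add_div_sub_conj_neg hz hr ?_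
  have hrz : ‖(r : ℂ) * z‖ = r := by
    rw [norm_mul, hz, Complex.norm_real, norm_of_nonneg hr.le, mul_one]
  calc ‖R (r * z)‖ ≤ 1 / (2 * n) * r := (hsmall _ (by rwa [hrz])).trans_eq (by rw [hrz])
    _ < r - ε / r := by rw [hgap]; field_simp; linarith

/-- If `R` is analytic near `0` with `R(0) = 0`, `R'(0) = … = R^{(n-2)}(0) = 0` and
`R^{(n-1)}(0)/(n-1)! = c > 0`, `n ≥ 3`, then for all sufficiently small `ε > 0`, the
winding of `F(w) = R(w) + ε/w − conj w` along the circle `|w| = η√ε`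
(with `η = √(n/(n-1))`) equals `−1`. -/
theorem winding_of_F_on_outer_circle (n : ℕ) (hn : 3 ≤ n) (c : ℝ) (hc : 0 < c)
    (R : ℂ → ℂ) (hR : AnalyticAt ℂ R 0) (hR0 : R 0 = 0)
    (hders : ∀ k : ℕ, 1 ≤ k → k ≤ n - 2 → iteratedDeriv k R 0 = 0)
    (hcder : iteratedDeriv (n - 1) R 0 = ((n - 1).factorial : ℂ) * (c : ℂ)) :
    ∃ ε₀ > 0, ∀ ε : ℝ, 0 < ε → ε < ε₀ →
      ∀ w : ℝ, hasWinding
        (fun t => R ((Real.sqrt ((n : ℝ) / ((n : ℝ) - 1)) * Real.sqrt ε : ℝ) *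
            Complex.exp ((t : ℂ) * Complex.I)) +
          (ε : ℂ) / ((Real.sqrt ((n : ℝ) / ((n : ℝ) - 1)) * Real.sqrt ε : ℝ) *
            Complex.exp ((t : ℂ) * Complex.I)) -
          (starRingEnd ℂ) ((Real.sqrt ((n : ℝ) / ((n : ℝ) - 1)) * Real.sqrt ε : ℝ) *
            Complex.exp ((t : ℂ) * Complex.I)))
        0 (2 * Real.pi) w →
      w = -1 :=
  winding_of_F_on_outer_circle_general n hn R hR hR0 hders
end

section
/- Let c > 1 and ε > 0. The function G(w) = c w + ε/w − conj(w) has exactly two zeros, namely w = ± i (ε/(1+c))^{1/2}, and at both zeros the analytic part R_G(w) = cw + ε/w satisfies |R_G'(w)| > 1 (i.e., both zeros are sense-preserving). -/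
/-!
Multiplying by `w` turns `G(w) = 0` into `c w² + ε = |w|²`. Its imaginary part
`2c · Re w · Im w = 0` and its real part (which has no solution with `Im w = 0` when `c ≥ 1`)
force `Re w = 0`, leaving `(1 + c) (Im w)² = ε`. At such a zero `w² = -ε/(1 + c)`, so
`R_G'(w) = c - ε/w² = 1 + 2c`.
-/

open ComplexConjugate

namespace Complex

theorem mul_add_div_sub_conj_eq_zero_iff (a b : ℂ) {w : ℂ} (hw : w ≠ 0) :
    a * w + b / w - conj w = 0 ↔ a * w ^ 2 + b = normSq w := by
  have hG : a * w + b / w - conj w = (a * w ^ 2 + b - normSq w) / w := by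
    rw [← mul_conj]
    field_simp
  rw [hG, div_eq_zero_iff, sub_eq_zero, or_iff_left hw]

theorem ofReal_mul_sq_add_ofReal_eq_normSq_iff {c ε : ℝ} (hc : 1 ≤ c) (hε : 0 < ε) (w : ℂ) :
    (c : ℂ) * w ^ 2 + ε = normSq w ↔ w.re = 0 ∧ (1 + c) * w.im ^ 2 = ε := by
  simp only [Complex.ext_iff, add_re, add_im, mul_re, mul_im, ofReal_re, ofReal_im, sq,
    normSq_apply, zero_mul, sub_zero, add_zero]
  constructor
  · rintro ⟨hre, him⟩
    have hre0 : w.re = 0 := by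
      have hreim : w.re * w.im = 0 := by
        have : c * (w.re * w.im) = 0 := by linarith
        exact (mul_eq_zero.mp this).resolve_left (by positivity)
      rcases mul_eq_zero.mp hreim with hx | hy
      · exact hx
      · rw [hy] at hre
        nlinarith [mul_self_nonneg w.re]
    rw [hre0] at hre
    exact ⟨hre0, by linarith⟩
  · rintro ⟨hre0, him⟩
    rw [hre0]
    constructor <;> linarith

theorem eq_I_mul_or_eq_neg_I_mul_iff (w : ℂ) (t : ℝ) :
    w = I * t ∨ w = -(I * t) ↔ w.re = 0 ∧ w.im ^ 2 = t ^ 2 := by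
  rw [sq_eq_sq_iff_eq_or_eq_neg]
  simp [Complex.ext_iff, and_or_left]

theorem ofReal_div_sq_of_re_eq_zero {c ε : ℝ} {w : ℂ} (hε : ε ≠ 0) (hre : w.re = 0)
    (him : (1 + c) * w.im ^ 2 = ε) : (ε : ℂ) / w ^ 2 = -(1 + c) := by
  have hw : w = w.im * I := by simp [Complex.ext_iff, hre]
  have him0 : (w.im : ℂ) ≠ 0 := by
    rw [ofReal_ne_zero]
    rintro h
    simp [h, eq_comm, hε] at him
  rw [hw, mul_pow, I_sq, ← him]
  push_cast
  field_simp

end Complex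

open Complex

/-- For `c > 1` and `ε > 0`, the function `G(w) = cw + ε/w − conj w` has exactly two
zeros, `w = ± i√(ε/(1+c))`, and at both of them the derivative of the analytic part
`R_G(w) = cw + ε/w` satisfies `|R_G'(w)| = |c − ε/w²| > 1` (both zeros are
sense-preserving). -/
theorem two_sense_preserving_zeros (c ε : ℝ) (hc : 1 < c) (hε : 0 < ε) :
    (∀ w : ℂ, w ≠ 0 →
      ((c : ℂ) * w + (ε : ℂ) / w - (starRingEnd ℂ) w = 0 ↔
        w = Complex.I * (Real.sqrt (ε / (1 + c)) : ℂ) ∨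
        w = -(Complex.I * (Real.sqrt (ε / (1 + c)) : ℂ)))) ∧
    ∀ w : ℂ, w ≠ 0 → (c : ℂ) * w + (ε : ℂ) / w - (starRingEnd ℂ) w = 0 →
      1 < ‖(c : ℂ) - (ε : ℂ) / w ^ 2‖ := by
  have hzero (w : ℂ) (hw : w ≠ 0) :
      (c : ℂ) * w + ε / w - conj w = 0 ↔ w.re = 0 ∧ (1 + c) * w.im ^ 2 = ε := by
    rw [mul_add_div_sub_conj_eq_zero_iff _ _ hw, ofReal_mul_sq_add_ofReal_eq_normSq_iff hc.le hε]
  refine ⟨fun w hw => ?_, fun w hw hG => ?_⟩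
  · rw [hzero w hw, eq_I_mul_or_eq_neg_I_mul_iff, Real.sq_sqrt (by positivity),
      eq_div_iff (by positivity), mul_comm]
  · obtain ⟨hre, him⟩ := (hzero w hw).mp hG
    have hR' : (c : ℂ) - -(1 + c) = ((1 + 2 * c : ℝ) : ℂ) := by push_cast; ring
    rw [ofReal_div_sq_of_re_eq_zero hε.ne' hre him, hR', norm_real,
      Real.norm_of_nonneg (by linarith)]
    linarith
end

section
/- Let 0 < c < 1 and ε > 0. The function G(w) = c w + ε/w − conj(w) has exactly four zeros: two sense-preserving zeros ± i (ε/(1+c))^{1/2} and two sense-reversing zeros ± (ε/(1−c))^{1/2}. -/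
/-! Multiplying by `w`, `G(w) = 0` becomes `c w² + ε = |w|²`. Its imaginary part
`2c · Re w · Im w = 0` forces `w` to be real or purely imaginary, and its real part then fixes
`w²`: `w² = ε/(1-c)` or `w² = -ε/(1+c)`. At these zeros `R_G'(w) = c - ε/w²` equals `2c - 1`
resp. `1 + 2c`. -/

open Complex

namespace Complex

theorem eq_I_mul_sqrt_or_eq_neg_iff {a : ℝ} (ha : 0 ≤ a) {w : ℂ} :
    w = I * (√a : ℂ) ∨ w = -(I * (√a : ℂ)) ↔ w.re = 0 ∧ w.im ^ 2 = a := by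
  constructor
  · rintro (rfl | rfl) <;> simp [ha]
  · rintro ⟨hre, him⟩
    have : w.im = √a ∨ w.im = -√a := by
      rw [← abs_eq (Real.sqrt_nonneg a), ← Real.sqrt_sq_eq_abs, him]
    rcases this with h | h
    · left; apply Complex.ext <;> simp [hre, h]
    · right; apply Complex.ext <;> simp [hre, h]

theorem eq_sqrt_or_eq_neg_iff {a : ℝ} (ha : 0 ≤ a) {w : ℂ} :
    w = (√a : ℂ) ∨ w = -(√a : ℂ) ↔ w.im = 0 ∧ w.re ^ 2 = a := by
  constructor
  · rintro (rfl | rfl) <;> simp [ha]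
  · rintro ⟨him, hre⟩
    have : w.re = √a ∨ w.re = -√a := by
      rw [← abs_eq (Real.sqrt_nonneg a), ← Real.sqrt_sq_eq_abs, hre]
    rcases this with h | h
    · left; apply Complex.ext <;> simp [him, h]
    · right; apply Complex.ext <;> simp [him, h]

end Complex

theorem mul_add_div_sub_conj_eq_zero_iff {c ε : ℝ} {w : ℂ} (hw : w ≠ 0) :
    (c : ℂ) * w + ε / w - starRingEnd ℂ w = 0 ↔ (c : ℂ) * w ^ 2 + ε = normSq w := by
  rw [← mul_conj, ← mul_left_inj' hw]
  constructor <;> intro h <;> field_simp at h ⊢ <;> linear_combination h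

theorem mul_sq_add_eq_normSq_iff {c ε : ℝ} (hc : c ≠ 0) (hc₁ : 1 + c ≠ 0) (hc₂ : 1 - c ≠ 0)
    {w : ℂ} :
    (c : ℂ) * w ^ 2 + ε = normSq w ↔
      w.re = 0 ∧ w.im ^ 2 = ε / (1 + c) ∨ w.im = 0 ∧ w.re ^ 2 = ε / (1 - c) := by
  obtain ⟨x, y⟩ := w
  simp only [Complex.ext_iff, add_re, add_im, mul_re, mul_im, ofReal_re, ofReal_im, sq, normSq_mk]
  simp only [zero_mul, sub_zero, add_zero, ← sq]
  rw [eq_div_iff hc₁, eq_div_iff hc₂]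
  constructor
  · rintro ⟨hre, him⟩
    have : x * y = 0 := by
      have := mul_eq_zero.mp (show c * (2 * (x * y)) = 0 by linear_combination him)
      simpa [hc] using this
    rcases mul_eq_zero.mp this with rfl | rfl
    · left; constructor <;> [rfl; linear_combination -hre]
    · right; constructor <;> [rfl; linear_combination -hre]
  · rintro (⟨rfl, h⟩ | ⟨rfl, h⟩) <;> exact ⟨by linear_combination -h, by ring⟩

theorem ofReal_sub_div_sq_eq_of_sq_eq_div {c ε d : ℝ} (hε : ε ≠ 0) {w : ℂ}
    (hw : w ^ 2 = ((ε / d : ℝ) : ℂ)) : (c : ℂ) - ε / w ^ 2 = ((c - d : ℝ) : ℂ) := by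
  rw [hw, ofReal_div, div_div_cancel₀ (ofReal_ne_zero.2 hε), ofReal_sub]

/-- For `0 < c < 1` and `ε > 0`, the function `G(w) = cw + ε/w − conj w` has exactly four
zeros: two sense-preserving zeros `± i√(ε/(1+c))` and two sense-reversing zeros
`± √(ε/(1−c))`, where a zero `w` is sense-preserving if `|R_G'(w)| = |c − ε/w²| > 1` and
sense-reversing if `|c − ε/w²| < 1`. -/
theorem two_preserving_two_reversing_zeros (c ε : ℝ) (hc0 : 0 < c) (hc1 : c < 1)
    (hε : 0 < ε) :
    (∀ w : ℂ, w ≠ 0 →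
      ((c : ℂ) * w + (ε : ℂ) / w - (starRingEnd ℂ) w = 0 ↔
        w = Complex.I * (Real.sqrt (ε / (1 + c)) : ℂ) ∨
        w = -(Complex.I * (Real.sqrt (ε / (1 + c)) : ℂ)) ∨
        w = (Real.sqrt (ε / (1 - c)) : ℂ) ∨
        w = -(Real.sqrt (ε / (1 - c)) : ℂ))) ∧
    (∀ w : ℂ, (w = Complex.I * (Real.sqrt (ε / (1 + c)) : ℂ) ∨
        w = -(Complex.I * (Real.sqrt (ε / (1 + c)) : ℂ))) →
      1 < ‖(c : ℂ) - (ε : ℂ) / w ^ 2‖) ∧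
    ∀ w : ℂ, (w = (Real.sqrt (ε / (1 - c)) : ℂ) ∨
        w = -(Real.sqrt (ε / (1 - c)) : ℂ)) →
      ‖(c : ℂ) - (ε : ℂ) / w ^ 2‖ < 1 := by
  have hp : 0 ≤ ε / (1 + c) := by positivity
  have hr : 0 ≤ ε / (1 - c) := div_nonneg hε.le (by linarith)
  refine ⟨fun w hw => ?_, fun w hw => ?_, fun w hw => ?_⟩
  · rw [mul_add_div_sub_conj_eq_zero_iff hw, mul_sq_add_eq_normSq_iff hc0.ne' (by linarith)
      (by linarith), ← eq_I_mul_sqrt_or_eq_neg_iff hp, ← eq_sqrt_or_eq_neg_iff hr, or_assoc]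
  · have hw2 : w ^ 2 = ((ε / -(1 + c) : ℝ) : ℂ) := by
      rw [div_neg, ofReal_neg]
      rcases hw with rfl | rfl <;> simp [mul_pow, ← ofReal_pow, Real.sq_sqrt hp]
    rw [ofReal_sub_div_sq_eq_of_sq_eq_div hε.ne' hw2, norm_real, Real.norm_eq_abs,
      lt_abs]
    left; linarith
  · have hw2 : w ^ 2 = ((ε / (1 - c) : ℝ) : ℂ) := by
      rcases hw with rfl | rfl <;> simp [← ofReal_pow, Real.sq_sqrt hr]
    rw [ofReal_sub_div_sq_eq_of_sq_eq_div hε.ne' hw2, norm_real, Real.norm_eq_abs,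
      abs_lt]
    constructor <;> linarith
end
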